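/- arXiv:2504.09176 — 2 statements merged into one kernel-verified Lean document; each statement's English description precedes it below -/
import Mathlib

section
/- Let a, k, ω, α be complex numbers with a ≠ 0, ω = -k²/a, and a + conj(a) = 0. Let c be a complex number, θ(x,t) = kx + ωt + α, g(x,t) = exp(θ(x,t)), f(x,t) = 1 + c·exp(θ(x,t) + conj(θ(x,t))). Then the Hirota bilinear expression a(g_t f - g f_t) + (g_xx f - 2 g_x f_x + g f_xx) vanishes identically in (x,t). -/
open Complex

private lemma hde (m b : ℂ) (x : ℝ) :
    HasDerivAt (fun x : ℝ => Complex.exp (m * x + b)) (m * Complex.exp (m * x + b)) x := by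
  have h : HasDerivAt (fun x : ℝ => m * (x : ℂ) + b) m x := by
    simpa using (Complex.ofRealCLM.hasDerivAt (x := x)).const_mul m |>.add_const b
  simpa [mul_comm] using h.cexp

private lemma dexp (m b : ℂ) :
    deriv (fun x : ℝ => Complex.exp (m * x + b)) = fun x : ℝ => m * Complex.exp (m * x + b) :=
  funext fun x => (hde m b x).deriv

private lemma dexpf (c m b : ℂ) :
    deriv (fun x : ℝ => 1 + c * Complex.exp (m * x + b))
      = fun x : ℝ => c * (m * Complex.exp (m * x + b)) :=
  funext fun x => (((hde m b x).const_mul c).const_add 1).deriv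

theorem stmt_5 (a k ω α c : ℂ) (ha : a ≠ 0) (hω : ω = -k ^ 2 / a)
    (haim : a + starRingEnd ℂ a = 0)
    (θ : ℝ → ℝ → ℂ) (hθ : ∀ x t : ℝ, θ x t = k * x + ω * t + α)
    (g f : ℝ → ℝ → ℂ)
    (hg : ∀ x t : ℝ, g x t = Complex.exp (θ x t))
    (hf : ∀ x t : ℝ, f x t = 1 + c * Complex.exp (θ x t + starRingEnd ℂ (θ x t))) :
    ∀ x t : ℝ,
      a * (deriv (fun t' : ℝ => g x t') t * f x t - g x t * deriv (fun t' : ℝ => f x t') t) +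
        (deriv (deriv (fun x' : ℝ => g x' t)) x * f x t -
          2 * deriv (fun x' : ℝ => g x' t) x * deriv (fun x' : ℝ => f x' t) x +
          g x t * deriv (deriv (fun x' : ℝ => f x' t)) x) = 0 := by
  intro x t
  set kc := starRingEnd ℂ k
  set ωc := starRingEnd ℂ ω
  set αc := starRingEnd ℂ α
  have hθc : ∀ x t : ℝ, starRingEnd ℂ (θ x t) = kc * x + ωc * t + αc := by
    intro x t
    simp [hθ, map_add, map_mul, Complex.conj_ofReal, kc, ωc, αc]
  have hgt : (fun t' : ℝ => g x t') = fun t' : ℝ => Complex.exp (ω * t' + (k * x + α)) := by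
    funext t'; rw [hg, hθ]; congr 1; ring
  have hgx : (fun x' : ℝ => g x' t) = fun x' : ℝ => Complex.exp (k * x' + (ω * t + α)) := by
    funext x'; rw [hg, hθ]; congr 1; ring
  have hft : (fun t' : ℝ => f x t')
      = fun t' : ℝ => 1 + c * Complex.exp ((ω + ωc) * t' + ((k + kc) * x + (α + αc))) := by
    funext t'; rw [hf, hθc, hθ]; congr 2; ring
  have hfx : (fun x' : ℝ => f x' t)
      = fun x' : ℝ => 1 + c * Complex.exp ((k + kc) * x' + ((ω + ωc) * t + (α + αc))) := by
    funext x'; rw [hf, hθc, hθ]; congr 2; ring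
  rw [hgt, hgx, hft, hfx, hg, hf, hθc, hθ]
  simp only [dexp, dexpf]
  rw [((hde k (ω * t + α) x).const_mul k).deriv,
    (((hde (k + kc) ((ω + ωc) * t + (α + αc)) x).const_mul (k + kc)).const_mul c).deriv]
  have hca : starRingEnd ℂ a = -a := by linear_combination haim
  have hωc : ωc = kc ^ 2 / a := by
    simp only [ωc, hω, map_div₀, map_neg, map_pow, hca]
    field_simp
    rfl
  subst hω
  rw [hωc]
  simp only [Complex.exp_add, add_mul, neg_mul, div_mul_eq_mul_div]
  field_simp
  ring
end

section
/- Let k be a nonzero real number, ω purely imaginary, l a complex number with l + conj(l) ≠ 0, σ₁ ∈ {1,-1}, α a complex number, and suppose σ₁·sign(k)·sign(l+conj(l)) = 1. Then for all real x, y, t the quantity 1 + σ₁·exp(2kx + α + conj(α))·exp((l+conj(l))y)/(2k(l+conj(l))) is a positive real number; in particular it never vanishes, so the solution u(x,y,t) = exp(kx + ly + ωt + α)/(1 + σ₁·exp(2kx + (l+conj(l))y + α + conj(α))/(2k(l+conj(l)))) is defined for all (x,y,t). -/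
theorem stmt_19 (k : ℝ) (hk : k ≠ 0) (ω : ℂ) (hω : ω.re = 0)
    (l : ℂ) (hl : l + starRingEnd ℂ l ≠ 0)
    (σ₁ : ℝ) (hσ : σ₁ = 1 ∨ σ₁ = -1) (α : ℂ)
    (hsign : σ₁ * Real.sign k * Real.sign ((l + starRingEnd ℂ l).re) = 1) :
    ∀ x y t : ℝ,
      (0 < (1 + (σ₁ : ℂ) *
            Complex.exp (2 * k * x + α + starRingEnd ℂ α) *
            Complex.exp ((l + starRingEnd ℂ l) * y) /
            (2 * k * (l + starRingEnd ℂ l))).re ∧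
        (1 + (σ₁ : ℂ) *
            Complex.exp (2 * k * x + α + starRingEnd ℂ α) *
            Complex.exp ((l + starRingEnd ℂ l) * y) /
            (2 * k * (l + starRingEnd ℂ l))).im = 0) ∧
      1 + (σ₁ : ℂ) *
          Complex.exp (2 * k * x + α + starRingEnd ℂ α) *
          Complex.exp ((l + starRingEnd ℂ l) * y) /
          (2 * k * (l + starRingEnd ℂ l)) ≠ 0 := by
  have hL : l + starRingEnd ℂ l = ((2 * l.re : ℝ) : ℂ) := by
    rw [Complex.add_conj]
  have hA : α + starRingEnd ℂ α = ((2 * α.re : ℝ) : ℂ) := by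
    rw [Complex.add_conj]
  have hlre : l.re ≠ 0 := by
    intro h; apply hl; rw [hL, h]; norm_num
  have hpos : 0 < σ₁ * (k * l.re) := by
    have h2 : (l + starRingEnd ℂ l).re = 2 * l.re := by
      simp [Complex.add_re, Complex.conj_re, two_mul]
    rw [h2] at hsign
    rcases hk.lt_or_gt with hk' | hk' <;> rcases hlre.lt_or_gt with hl' | hl' <;>
      [rw [Real.sign_of_neg hk', Real.sign_of_neg (by linarith : 2 * l.re < 0)] at hsign;
       rw [Real.sign_of_neg hk', Real.sign_of_pos (by linarith : 0 < 2 * l.re)] at hsign;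
       rw [Real.sign_of_pos hk', Real.sign_of_neg (by linarith : 2 * l.re < 0)] at hsign;
       rw [Real.sign_of_pos hk', Real.sign_of_pos (by linarith : 0 < 2 * l.re)] at hsign] <;>
      rcases hσ with h | h <;> subst h <;> nlinarith
  intro x y t
  have key : (1 + (σ₁ : ℂ) *
          Complex.exp (2 * k * x + α + starRingEnd ℂ α) *
          Complex.exp ((l + starRingEnd ℂ l) * y) /
          (2 * k * (l + starRingEnd ℂ l)))
      = ((1 + σ₁ * (Real.exp (2 * k * x + 2 * α.re) * Real.exp (2 * l.re * y)) /
          (2 * k * (2 * l.re)) : ℝ) : ℂ) := by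
    rw [hL, add_assoc, hA]
    have e1 : (2 * (k : ℂ) * x + ((2 * α.re : ℝ) : ℂ)) = ((2 * k * x + 2 * α.re : ℝ) : ℂ) := by
      push_cast; ring
    have e2 : (((2 * l.re : ℝ) : ℂ) * y) = (((2 * l.re) * y : ℝ) : ℂ) := by
      push_cast; ring
    rw [e1, e2, ← Complex.ofReal_exp, ← Complex.ofReal_exp]
    push_cast; ring
  have hE : 0 < 1 + σ₁ * (Real.exp (2 * k * x + 2 * α.re) * Real.exp (2 * l.re * y)) /
      (2 * k * (2 * l.re)) := by
    have hkl : k * l.re ≠ 0 := mul_ne_zero hk hlre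
    have hrw : σ₁ * (Real.exp (2 * k * x + 2 * α.re) * Real.exp (2 * l.re * y)) /
        (2 * k * (2 * l.re))
        = (Real.exp (2 * k * x + 2 * α.re) * Real.exp (2 * l.re * y)) * (σ₁ * (k * l.re)) /
          (4 * (k * l.re) ^ 2) := by
      field_simp; ring
    rw [hrw]
    have : 0 < (Real.exp (2 * k * x + 2 * α.re) * Real.exp (2 * l.re * y)) * (σ₁ * (k * l.re)) /
        (4 * (k * l.re) ^ 2) := by
      apply div_pos (mul_pos (by positivity) hpos) (by positivity)
    linarith
  rw [key]
  refine ⟨⟨by rw [Complex.ofReal_re]; exact hE, by rw [Complex.ofReal_im]⟩, ?_⟩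
  exact_mod_cast ne_of_gt hE
end
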